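/- arXiv:1501.04514 — 2 statements merged into one kernel-verified Lean document; each statement's English description precedes it below -/
import Mathlib

section
/- Let X and Y be reflexive Banach spaces and B : X × Y → ℝ a bounded bilinear form. Then the following are equivalent: (i) B satisfies the inf-sup condition inf_{0≠w∈X} sup_{0≠v∈Y} B(w,v)/(‖w‖_X ‖v‖_Y) ≥ γ > 0 together with the adjoint injectivity condition sup_{w∈X} B(w,v) > 0 for all 0≠v∈Y; (ii) for every F ∈ Y* the problem B(u,v) = F(v) for all v ∈ Y admits a unique solution u ∈ X, and in this case ‖u‖_X ≤ γ⁻¹ ‖F‖_{Y*}. -/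
/-!
Since `‖B w‖_{Y*} = sup_{v ≠ 0} B(w,v)/‖v‖`, the inf-sup condition says exactly that the operator
`B : X → Y*` is bounded below by `γ`; hence it is injective with closed range. A functional on `Y*`
annihilating that range is, by reflexivity of `Y`, evaluation at some `v` with `B(·,v) = 0`, so adjoint
injectivity forces it to vanish and Hahn–Banach gives surjectivity. Conversely, the a priori bound
applied to `F = B w` is the inf-sup condition, and solving with a norming functional of `v` produces
`w` with `B(w,v) = ‖v‖ > 0`.
-/

open NormedSpace

theorem StrongDual.iSup_div_norm_eq_norm {E : Type*} [NormedAddCommGroup E] [NormedSpace ℝ E]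
    (f : StrongDual ℝ E) : ⨆ v : {v : E // v ≠ 0}, f v / ‖(v : E)‖ = ‖f‖ := by
  have hle : ∀ v : {v : E // v ≠ 0}, f v / ‖(v : E)‖ ≤ ‖f‖ := fun v =>
    div_le_of_le_mul₀ (norm_nonneg _) (norm_nonneg _) ((Real.le_norm_self _).trans (f.le_opNorm v))
  refine le_antisymm (Real.iSup_le hle (norm_nonneg f)) ?_
  set M := ⨆ v : {v : E // v ≠ 0}, f v / ‖(v : E)‖
  have hM : ∀ v : E, v ≠ 0 → f v ≤ M * ‖v‖ := fun v hv =>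
    (div_le_iff₀ (norm_pos_iff.2 hv)).1 (le_ciSup ⟨‖f‖, Set.forall_mem_range.2 hle⟩ ⟨v, hv⟩)
  have habs : ∀ v : E, v ≠ 0 → |f v| ≤ M * ‖v‖ := fun v hv =>
    abs_le'.2 ⟨hM v hv, by simpa using hM (-v) (neg_ne_zero.2 hv)⟩
  have hM0 : 0 ≤ M := by
    rcases isEmpty_or_nonempty {v : E // v ≠ 0} with _ | ⟨v, hv⟩
    · exact (Real.iSup_of_isEmpty _).ge
    · exact nonneg_of_mul_nonneg_left ((abs_nonneg _).trans (habs v hv)) (norm_pos_iff.2 hv)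
  exact f.opNorm_le_bound' hM0 fun v hv => habs v (norm_ne_zero_iff.1 hv)

theorem Submodule.exists_dual_forall_mem_eq_zero_and_ne_zero {𝕜 E : Type*} [RCLike 𝕜]
    [NormedAddCommGroup E] [NormedSpace 𝕜 E] {S : Submodule 𝕜 E} (hS : IsClosed (S : Set E))
    {x : E} (hx : x ∉ S) : ∃ f : StrongDual 𝕜 E, (∀ y ∈ S, f y = 0) ∧ f x ≠ 0 := by
  -- makes `E ⧸ S` a normed (hence Hausdorff) space, where Hahn–Banach separates points
  have : IsClosed (S : Set E) := hS
  obtain ⟨g, hg⟩ := SeparatingDual.exists_ne_zero (R := 𝕜) (x := S.mkQ x)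
    (by rwa [ne_eq, Submodule.mkQ_apply, Submodule.Quotient.mk_eq_zero])
  exact ⟨g.comp S.mkQL, fun y hy => by simp [(Submodule.Quotient.mk_eq_zero S).2 hy], hg⟩

theorem ContinuousLinearMap.surjective_of_isClosed_range_of_reflexive {𝕜 X Y : Type*} [RCLike 𝕜]
    [NormedAddCommGroup X] [NormedSpace 𝕜 X] [NormedAddCommGroup Y] [NormedSpace 𝕜 Y]
    (hY : Function.Surjective (inclusionInDoubleDual 𝕜 Y)) (T : X →L[𝕜] StrongDual 𝕜 Y)
    (hT : IsClosed (Set.range T)) (hsep : ∀ v : Y, (∀ w, T w v = 0) → v = 0) :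
    Function.Surjective T := by
  intro F
  by_contra hF
  obtain ⟨φ, hφ, hφF⟩ := Submodule.exists_dual_forall_mem_eq_zero_and_ne_zero
    (S := LinearMap.range (T : X →ₗ[𝕜] StrongDual 𝕜 Y)) (by rw [LinearMap.coe_range]; exact hT)
    (x := F) (by simpa using hF)
  obtain ⟨v, rfl⟩ := hY φ
  have hv : v = 0 := hsep v fun w => by simpa using hφ (T w) ⟨w, rfl⟩
  simp [hv] at hφF

theorem stmt0_general {X Y : Type*}
    [NormedAddCommGroup X] [NormedSpace ℝ X] [CompleteSpace X]
    [NormedAddCommGroup Y] [NormedSpace ℝ Y]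
    (hreflY : Function.Bijective (NormedSpace.inclusionInDoubleDual ℝ Y))
    (B : X →L[ℝ] Y →L[ℝ] ℝ)
    (γ : ℝ) (hγ : 0 < γ) :
    ((∀ w : X, w ≠ 0 → γ * ‖w‖ ≤ ⨆ v : {v : Y // v ≠ 0}, B w (v : Y) / ‖(v : Y)‖) ∧
      (∀ v : Y, v ≠ 0 → ∃ w : X, 0 < B w v))
    ↔
    (∀ F : Y →L[ℝ] ℝ,
      (∃! u : X, ∀ v : Y, B u v = F v) ∧
      (∀ u : X, (∀ v : Y, B u v = F v) → ‖u‖ ≤ γ⁻¹ * ‖F‖)) := by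
  have hinfsup : (∀ w : X, w ≠ 0 → γ * ‖w‖ ≤ ⨆ v : {v : Y // v ≠ 0}, B w (v : Y) / ‖(v : Y)‖) ↔
      ∀ w, ‖w‖ ≤ γ⁻¹ * ‖B w‖ := by
    simp_rw [StrongDual.iSup_div_norm_eq_norm, le_inv_mul_iff₀ hγ]
    refine ⟨fun h w => ?_, fun h w _ => h w⟩
    rcases eq_or_ne w 0 with rfl | hw
    · simp
    · exact h w hw
  simp_rw [hinfsup, ← ContinuousLinearMap.ext_iff]
  constructor
  · rintro ⟨hbound, hadj⟩ F
    have hanti : AntilipschitzWith ⟨γ⁻¹, (inv_pos.2 hγ).le⟩ B := B.antilipschitz_of_bound hbound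
    have hsurj : Function.Surjective B :=
      B.surjective_of_isClosed_range_of_reflexive hreflY.2 (hanti.isClosed_range B.uniformContinuous)
        fun v hv => by_contra fun hv0 => (hadj v hv0).elim fun w hw => hw.ne' (hv w)
    exact ⟨Function.Bijective.existsUnique ⟨hanti.injective, hsurj⟩ F, by rintro u rfl; exact hbound u⟩
  · intro hsolve
    refine ⟨fun w => (hsolve (B w)).2 w rfl, fun v hv => ?_⟩
    obtain ⟨g, -, hgv⟩ := exists_dual_vector ℝ v (norm_ne_zero_iff.2 hv)
    obtain ⟨u, rfl⟩ := (hsolve g).1.exists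
    exact ⟨u, hgv ▸ norm_pos_iff.2 hv⟩

/-- Nečas / Banach–Nečas–Babuška theorem: for a bounded bilinear
form `B` on reflexive Banach spaces `X × Y`, the inf-sup condition with constant
`γ > 0` together with the adjoint injectivity condition holds if and only if
every `F ∈ Y*` admits a unique solution `u ∈ X` of `B(u,·) = F`, and in that
case `‖u‖ ≤ γ⁻¹ ‖F‖`. -/
theorem stmt0 {X Y : Type*}
    [NormedAddCommGroup X] [NormedSpace ℝ X] [CompleteSpace X]
    [NormedAddCommGroup Y] [NormedSpace ℝ Y] [CompleteSpace Y]
    (hreflX : Function.Bijective (NormedSpace.inclusionInDoubleDual ℝ X))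
    (hreflY : Function.Bijective (NormedSpace.inclusionInDoubleDual ℝ Y))
    (B : X →L[ℝ] Y →L[ℝ] ℝ) (C : ℝ)
    (hbdd : ∀ w v, |B w v| ≤ C * ‖w‖ * ‖v‖)
    (γ : ℝ) (hγ : 0 < γ) :
    ((∀ w : X, w ≠ 0 → γ * ‖w‖ ≤ ⨆ v : {v : Y // v ≠ 0}, B w (v : Y) / ‖(v : Y)‖) ∧
      (∀ v : Y, v ≠ 0 → ∃ w : X, 0 < B w v))
    ↔
    (∀ F : Y →L[ℝ] ℝ,
      (∃! u : X, ∀ v : Y, B u v = F v) ∧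
      (∀ u : X, (∀ v : Y, B u v = F v) → ‖u‖ ≤ γ⁻¹ * ‖F‖)) :=
  stmt0_general hreflY B γ hγ
end

section
/- Let w, v : (0,∞) → ℝ be smooth functions with w(0) = 0 and w, v rapidly decaying (in the test classes F₀(ℝ₊) and F(ℝ₊)). Then ∫₀^∞ w(t)(−v'(t)) dt = ∫₀^∞ (D₊^{1/2} w)(t)(D₋^{1/2} v)(t) dt, where D₊^{1/2} w = D(I₊^{1/2} w) and D₋^{1/2} v = −D(I₋^{1/2} v). -/
open MeasureTheory Set

/-- Left-sided fractional half-derivative on `(0,∞)`: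
`D₊^{1/2} w = D (I₊^{1/2} w)`. -/
noncomputable def DplusHalf (w : ℝ → ℝ) (t : ℝ) : ℝ :=
  deriv (fun τ => (Real.Gamma (1 / 2))⁻¹ *
    ∫ s in Set.Ioc (0 : ℝ) τ, (τ - s) ^ (-(1 / 2) : ℝ) * w s) t

/-- Right-sided fractional half-derivative on `(0,∞)`:
`D₋^{1/2} v = −D (I₋^{1/2} v)`. -/
noncomputable def DminusHalf (v : ℝ → ℝ) (t : ℝ) : ℝ :=
  - deriv (fun τ => (Real.Gamma (1 / 2))⁻¹ *
    ∫ s in Set.Ioi τ, (s - τ) ^ (-(1 / 2) : ℝ) * v s) t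

open Metric

section Stmt6Aux

lemma rpow_nh_nonpos {x : ℝ} (hx : x ≤ 0) : x ^ (-(1/2) : ℝ) = 0 := by
  rcases lt_or_eq_of_le hx with h | h
  · rw [Real.rpow_def_of_neg h]
    have : Real.cos (-(1/2) * Real.pi) = 0 := by
      rw [show (-(1/2) : ℝ) * Real.pi = -(Real.pi/2) by ring, Real.cos_neg,
        Real.cos_pi_div_two]
    rw [this, mul_zero]
  · subst h; rw [Real.zero_rpow (by norm_num)]

lemma cF_eq : ∀ x ∈ Icc (0:ℝ) 1,
    ((x:ℂ) ^ ((1/2:ℂ) - 1) * (1 - (x:ℂ)) ^ ((1/2:ℂ) - 1))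
      = ((x ^ (-(1/2):ℝ) * (1-x) ^ (-(1/2):ℝ) : ℝ) : ℂ) := by
  intro x hx
  have h1 : ((1/2:ℂ) - 1) = ((-(1/2) : ℝ) : ℂ) := by norm_num
  rw [h1, ← Complex.ofReal_cpow hx.1, ← Complex.ofReal_one, ← Complex.ofReal_sub,
    ← Complex.ofReal_cpow (by linarith [hx.2]), ← Complex.ofReal_mul]

lemma beta01 : ∫ x in (0:ℝ)..1, x ^ (-(1/2):ℝ) * (1-x) ^ (-(1/2):ℝ) = Real.pi := by
  have h := Complex.Gamma_mul_Gamma_eq_betaIntegral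
    (s := 1/2) (t := 1/2) (by norm_num) (by norm_num)
  have hG : Complex.Gamma (1/2) = (Real.sqrt Real.pi : ℂ) := by
    rw [show ((1:ℂ)/2) = ((1/2 : ℝ) : ℂ) by norm_num, Complex.Gamma_ofReal,
      Real.Gamma_one_half_eq]
  have hB : Complex.betaIntegral (1/2) (1/2) = (Real.pi : ℂ) := by
    rw [hG, show ((1:ℂ)/2 + 1/2) = 1 by norm_num, Complex.Gamma_one, one_mul] at h
    rw [← h, ← Complex.ofReal_mul, Real.mul_self_sqrt Real.pi_pos.le]
  have hcong : Complex.betaIntegral (1/2) (1/2)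
      = ((∫ x in (0:ℝ)..1, x ^ (-(1/2):ℝ) * (1-x) ^ (-(1/2):ℝ) : ℝ) : ℂ) := by
    rw [Complex.betaIntegral, ← intervalIntegral.integral_ofReal]
    refine intervalIntegral.integral_congr (fun x hx => ?_)
    exact cF_eq x (by rwa [uIcc_of_le (by norm_num : (0:ℝ) ≤ 1)] at hx)
  rw [hcong] at hB
  exact_mod_cast hB

lemma beta01_integrable : IntervalIntegrable
    (fun x : ℝ => x ^ (-(1/2):ℝ) * (1-x) ^ (-(1/2):ℝ)) volume 0 1 := by
  have h := Complex.betaIntegral_convergent (u := 1/2) (v := 1/2) (by norm_num) (by norm_num)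
  rw [intervalIntegrable_iff_integrableOn_Ioc_of_le (by norm_num)] at h ⊢
  have : IntegrableOn (fun x : ℝ =>
      ((x:ℂ) ^ ((1/2:ℂ) - 1) * (1 - (x:ℂ)) ^ ((1/2:ℂ) - 1)).re) (Ioc 0 1) := h.re
  refine this.congr_fun (fun x hx => ?_) measurableSet_Ioc
  dsimp only; rw [cF_eq x ⟨hx.1.le, hx.2⟩, Complex.ofReal_re]



lemma kernel_eq {a b : ℝ} (h : a < b) (t : ℝ) :
    (t-a) ^ (-(1/2):ℝ) * (b-t) ^ (-(1/2):ℝ)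
      = (b-a)⁻¹ * (((t-a)*(b-a)⁻¹) ^ (-(1/2):ℝ) * (1-(t-a)*(b-a)⁻¹) ^ (-(1/2):ℝ)) := by
  have hc : (0:ℝ) < b - a := by linarith
  set x := (t-a)*(b-a)⁻¹ with hx
  have hta : t - a = (b-a) * x := by
    rw [hx, mul_comm (t-a), ← mul_assoc, mul_inv_cancel₀ hc.ne', one_mul]
  have hbt : b - t = (b-a) * (1-x) := by rw [hx]; field_simp; ring
  rcases le_or_gt x 0 with h1 | h1
  · have l1 : (t-a) ^ (-(1/2):ℝ) = 0 := rpow_nh_nonpos (by nlinarith)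
    have r1 : x ^ (-(1/2):ℝ) = 0 := rpow_nh_nonpos h1
    rw [l1, r1]; simp
  rcases le_or_gt (1-x) 0 with h2 | h2
  · have l1 : (b-t) ^ (-(1/2):ℝ) = 0 := rpow_nh_nonpos (by nlinarith)
    have r1 : (1-x) ^ (-(1/2):ℝ) = 0 := rpow_nh_nonpos h2
    rw [l1, r1]; simp
  · rw [hta, hbt, Real.mul_rpow hc.le h1.le, Real.mul_rpow hc.le h2.le]
    have : (b-a) ^ (-(1/2):ℝ) * (b-a) ^ (-(1/2):ℝ) = (b-a)⁻¹ := by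
      rw [← Real.rpow_add hc, ← Real.rpow_neg_one]; norm_num
    calc (b-a) ^ (-(1/2):ℝ) * x ^ (-(1/2):ℝ) * ((b-a) ^ (-(1/2):ℝ) * (1-x) ^ (-(1/2):ℝ))
        = ((b-a) ^ (-(1/2):ℝ) * (b-a) ^ (-(1/2):ℝ)) * (x ^ (-(1/2):ℝ) * (1-x) ^ (-(1/2):ℝ)) := by
          ring
      _ = _ := by rw [this]

lemma kernel_vanish {a b t : ℝ} (ht : t ∉ Ioo a b) :
    (t-a) ^ (-(1/2):ℝ) * (b-t) ^ (-(1/2):ℝ) = 0 := by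
  rw [mem_Ioo, not_and_or] at ht
  rcases ht with h | h
  · push_neg at h
    rw [rpow_nh_nonpos (by linarith), zero_mul]
  · push_neg at h
    rw [rpow_nh_nonpos (sub_nonpos.2 h), mul_zero]

lemma kernel_intervalIntegrable {a b : ℝ} (h : a < b) :
    IntervalIntegrable (fun t => (t-a) ^ (-(1/2):ℝ) * (b-t) ^ (-(1/2):ℝ)) volume a b := by
  have hc : (0:ℝ) < b - a := by linarith
  have h1 := (beta01_integrable.comp_mul_right (c := (b-a)⁻¹)).comp_sub_right a
  have h2 := (h1.const_mul (b-a)⁻¹)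
  have e0 : (0:ℝ) / (b-a)⁻¹ + a = a := by simp
  have e1 : (1:ℝ) / (b-a)⁻¹ + a = b := by field_simp; ring
  rw [e0, e1] at h2
  exact h2.congr_ae (Filter.Eventually.of_forall (fun t => (kernel_eq h t).symm))

lemma kernel_integrable (a b : ℝ) :
    Integrable (fun t => (t-a) ^ (-(1/2):ℝ) * (b-t) ^ (-(1/2):ℝ)) volume := by
  rcases lt_or_ge a b with h | h
  · have hs : Function.support (fun t => (t-a) ^ (-(1/2):ℝ) * (b-t) ^ (-(1/2):ℝ)) ⊆ Ioc a b := by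
      intro t ht
      by_contra hmem
      exact ht (kernel_vanish (fun hm => hmem ⟨hm.1, hm.2.le⟩))
    rw [← integrableOn_iff_integrable_of_support_subset hs]
    exact (kernel_intervalIntegrable h).1.congr
      (ae_restrict_of_ae (Filter.Eventually.of_forall fun t => rfl))
  · have : (fun t => (t-a) ^ (-(1/2):ℝ) * (b-t) ^ (-(1/2):ℝ)) = (fun _ => (0:ℝ)) := by
      funext t
      rcases le_or_gt t a with h1 | h1
      · exact kernel_vanish (fun hm => absurd hm.1 (not_lt.2 h1))
      · exact kernel_vanish (fun hm => absurd hm.2 (not_lt.2 (le_trans h h1.le)))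
    rw [this]; exact integrable_zero _ _ _

lemma kernel_integral (a b : ℝ) :
    ∫ t, (t-a) ^ (-(1/2):ℝ) * (b-t) ^ (-(1/2):ℝ) = if a < b then Real.pi else 0 := by
  rcases lt_or_ge a b with h | h
  · rw [if_pos h]
    have hc : (0:ℝ) < b - a := by linarith
    rw [← setIntegral_eq_integral_of_forall_compl_eq_zero
      (s := Ioc a b) (fun t ht => kernel_vanish (fun hm => ht ⟨hm.1, hm.2.le⟩))]
    rw [← intervalIntegral.integral_of_le h.le]
    have key := intervalIntegral.integral_comp_mul_add
      (f := fun x : ℝ => x ^ (-(1/2):ℝ) * (1-x) ^ (-(1/2):ℝ))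
      (a := a) (b := b) (c := (b-a)⁻¹) (d := -(a * (b-a)⁻¹)) (inv_ne_zero (ne_of_gt hc))
    have e0 : (b-a)⁻¹ * a + -(a * (b-a)⁻¹) = 0 := by ring
    have e1 : (b-a)⁻¹ * b + -(a * (b-a)⁻¹) = 1 := by field_simp; ring
    rw [e0, e1, beta01, inv_inv] at key
    calc ∫ t in a..b, (t-a) ^ (-(1/2):ℝ) * (b-t) ^ (-(1/2):ℝ)
        = ∫ t in a..b, (b-a)⁻¹ * ((((b-a)⁻¹ * t + -(a * (b-a)⁻¹)) ^ (-(1/2):ℝ)) * (1-((b-a)⁻¹ * t + -(a * (b-a)⁻¹))) ^ (-(1/2):ℝ)) := by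
          refine intervalIntegral.integral_congr (fun t _ => ?_)
          have harg : (b-a)⁻¹ * t + -(a * (b-a)⁻¹) = (t-a)*(b-a)⁻¹ := by ring
          rw [harg]
          exact kernel_eq h t
      _ = (b-a)⁻¹ * ∫ t in a..b, (((b-a)⁻¹ * t + -(a * (b-a)⁻¹)) ^ (-(1/2):ℝ)) * (1-((b-a)⁻¹ * t + -(a * (b-a)⁻¹))) ^ (-(1/2):ℝ) := by
          rw [intervalIntegral.integral_const_mul]
      _ = (b-a)⁻¹ * ((b-a) • Real.pi) := by rw [key]
      _ = Real.pi := by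
          rw [smul_eq_mul, ← mul_assoc, inv_mul_cancel₀ (ne_of_gt hc), one_mul]
  · rw [if_neg (not_lt.2 h)]
    have : ∀ t : ℝ, (t-a) ^ (-(1/2):ℝ) * (b-t) ^ (-(1/2):ℝ) = 0 := by
      intro t
      rcases le_or_gt t a with h1 | h1
      · exact kernel_vanish (fun hm => absurd hm.1 (not_lt.2 h1))
      · exact kernel_vanish (fun hm => absurd hm.2 (not_lt.2 (le_trans h h1.le)))
    simp only [this, integral_zero]



lemma rpow_nh_nonneg (x : ℝ) : 0 ≤ x ^ (-(1/2) : ℝ) := by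
  rcases le_or_gt x 0 with h | h
  · rw [rpow_nh_nonpos h]
  · exact (Real.rpow_pos_of_pos h _).le

lemma meas_nh : Measurable (fun u : ℝ => u ^ (-(1/2) : ℝ)) := by measurability

lemma indicator_rpow_integrable {T : ℝ} (hT : 0 < T) (c : ℝ) :
    Integrable (Set.indicator (Ioc (0:ℝ) T) (fun u => c * u ^ (-(1/2):ℝ)))
      (volume.restrict (Ioi 0)) := by
  refine Integrable.restrict ?_
  rw [integrable_indicator_iff measurableSet_Ioc]
  have h := (intervalIntegral.intervalIntegrable_rpow' (a := 0) (b := T)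
    (r := -(1/2)) (by norm_num))
  rw [intervalIntegrable_iff_integrableOn_Ioc_of_le hT.le] at h
  exact h.const_mul c

lemma twopiece_integrable (M C : ℝ) :
    Integrable (fun u => if u ≤ 1 then M * u ^ (-(1/2):ℝ)
      else C * u ^ (-2:ℝ) * u ^ (-(1/2):ℝ)) (volume.restrict (Ioi 0)) := by
  have : IntegrableOn (fun u => if u ≤ 1 then M * u ^ (-(1/2):ℝ)
      else C * u ^ (-2:ℝ) * u ^ (-(1/2):ℝ)) (Ioc 0 1 ∪ Ioi 1) := by
    refine IntegrableOn.union ?_ ?_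
    · have h := (intervalIntegral.intervalIntegrable_rpow' (a := 0) (b := 1)
        (r := -(1/2)) (by norm_num))
      rw [intervalIntegrable_iff_integrableOn_Ioc_of_le zero_le_one] at h
      refine IntegrableOn.congr_fun (h.const_mul M) (fun u hu => ?_) measurableSet_Ioc
      rw [if_pos hu.2]
    · have h := integrableOn_Ioi_rpow_of_lt (a := -(5/2)) (by norm_num) (one_pos)
      refine IntegrableOn.congr_fun (h.const_mul C) (fun u hu => ?_) measurableSet_Ioi
      have hu1 : (1:ℝ) < u := hu
      rw [if_neg (not_le.2 hu1), mul_assoc, ← Real.rpow_add (by linarith)]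
      norm_num
  rwa [Ioc_union_Ioi_eq_Ioi zero_le_one] at this

lemma hasDerivAt_left {w : ℝ → ℝ} (hw : ContDiff ℝ (⊤ : ℕ∞) w)
    {Mw M1 : ℝ} (hMw : ∀ s, |w s| ≤ Mw) (hM1 : ∀ s, |deriv w s| ≤ M1)
    (hw0 : ∀ s ≤ (0:ℝ), w s = 0) (hf0 : ∀ s < (0:ℝ), deriv w s = 0) (t : ℝ) :
    HasDerivAt (fun τ => ∫ u in Ioi (0:ℝ), u ^ (-(1/2):ℝ) * w (τ - u))
      (∫ u in Ioi (0:ℝ), u ^ (-(1/2):ℝ) * deriv w (t - u)) t := by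
  have hwc : Continuous w := hw.continuous
  have hwd : Differentiable ℝ w := hw.differentiable (by simp)
  have hder : ∀ (x u : ℝ), HasDerivAt (fun x => u ^ (-(1/2):ℝ) * w (x - u))
      (u ^ (-(1/2):ℝ) * deriv w (x - u)) x := by
    intro x u
    have h1 : HasDerivAt (fun x => w (x - u)) (deriv w (x - u)) x := by
      simpa [Function.comp_def] using (HasDerivAt.comp x (hwd (x - u)).hasDerivAt
        ((hasDerivAt_id x).sub_const u))
    exact h1.const_mul _
  have hFmeas : ∀ x : ℝ, AEStronglyMeasurable (fun u => u ^ (-(1/2):ℝ) * w (x - u))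
      (volume.restrict (Ioi 0)) :=
    fun x => ((meas_nh.mul ((hwc.comp (continuous_const.sub continuous_id)).measurable))).aestronglyMeasurable
  have hF'meas : AEStronglyMeasurable (fun u => u ^ (-(1/2):ℝ) * deriv w (t - u))
      (volume.restrict (Ioi 0)) :=
    ((meas_nh.mul (((hw.continuous_deriv (by simp)).comp
      (continuous_const.sub continuous_id)).measurable))).aestronglyMeasurable
  have hboundF' : ∀ u : ℝ, ∀ x ∈ ball t 1,
      ‖u ^ (-(1/2):ℝ) * deriv w (x - u)‖
        ≤ Set.indicator (Ioc (0:ℝ) (|t|+1)) (fun u => M1 * u ^ (-(1/2):ℝ)) u := by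
    intro u x hx
    rcases le_or_gt u 0 with hu | hu
    · rw [rpow_nh_nonpos hu, zero_mul, norm_zero]
      rw [indicator_of_notMem (fun hm => absurd (mem_Ioc.1 hm).1 (not_lt.2 hu))]
    rcases le_or_gt u (|t|+1) with h1 | h1
    · rw [indicator_of_mem (mem_Ioc.2 ⟨hu, h1⟩), Real.norm_eq_abs, abs_mul,
        abs_of_nonneg (rpow_nh_nonneg u), mul_comm (M1)]
      exact mul_le_mul_of_nonneg_left (hM1 _) (rpow_nh_nonneg u)
    · have hx1 : x - u < 0 := by
        have := abs_lt.1 (mem_ball_iff_norm.1 hx)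
        have : x < t + 1 := by
          have h := (mem_ball_iff_norm.1 hx)
          rw [Real.norm_eq_abs] at h
          linarith [abs_lt.1 h |>.1, abs_lt.1 h |>.2]
        nlinarith [le_abs_self t]
      rw [hf0 _ hx1, mul_zero, norm_zero,
        indicator_of_notMem (fun hm => absurd (mem_Ioc.1 hm).2 (not_le.2 h1))]
  have key := hasDerivAt_integral_of_dominated_loc_of_deriv_le (s := ball t 1) (ball_mem_nhds t one_pos)
    (F := fun x u => u ^ (-(1/2):ℝ) * w (x - u))
    (F' := fun x u => u ^ (-(1/2):ℝ) * deriv w (x - u))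
    (x₀ := t)
    (bound := Set.indicator (Ioc (0:ℝ) (|t|+1)) (fun u => M1 * u ^ (-(1/2):ℝ)))
    (Filter.Eventually.of_forall hFmeas)
    ?_ hF'meas
    (Filter.Eventually.of_forall (fun u => hboundF' u))
    (indicator_rpow_integrable (by positivity) M1)
    (Filter.Eventually.of_forall (fun u x _ => hder x u))
  · exact key.2
  · -- integrability of F t
    refine Integrable.mono' (indicator_rpow_integrable (by positivity : (0:ℝ) < |t|+1) Mw)
      (hFmeas t) (Filter.Eventually.of_forall (fun u => ?_))
    show ‖u ^ (-(1/2):ℝ) * w (t - u)‖ ≤ _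
    rcases le_or_gt u 0 with hu | hu
    · rw [rpow_nh_nonpos hu, zero_mul, norm_zero,
        indicator_of_notMem (fun hm => absurd (mem_Ioc.1 hm).1 (not_lt.2 hu))]
    rcases le_or_gt u (|t|+1) with h1 | h1
    · rw [indicator_of_mem (mem_Ioc.2 ⟨hu, h1⟩), Real.norm_eq_abs, abs_mul,
        abs_of_nonneg (rpow_nh_nonneg u), mul_comm (Mw)]
      exact mul_le_mul_of_nonneg_left (hMw _) (rpow_nh_nonneg u)
    · have hx1 : t - u ≤ 0 := by nlinarith [le_abs_self t]
      rw [hw0 _ hx1, mul_zero, norm_zero,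
        indicator_of_notMem (fun hm => absurd (mem_Ioc.1 hm).2 (not_le.2 h1))]

lemma twopiece_bound {h : ℝ → ℝ} {M C x : ℝ}
    (hM : ∀ s, |h s| ≤ M) (hC : ∀ s, s^2 * |h s| ≤ C) (hx : 0 < x) (u : ℝ) :
    ‖u ^ (-(1/2):ℝ) * h (x + u)‖
      ≤ (if u ≤ 1 then M * u ^ (-(1/2):ℝ) else C * u ^ (-2:ℝ) * u ^ (-(1/2):ℝ)) := by
  have hC0 : 0 ≤ C := le_trans (by positivity) (hC 1)
  rcases le_or_gt u 0 with hu | hu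
  · rw [rpow_nh_nonpos hu, zero_mul, norm_zero, if_pos (hu.trans zero_le_one), mul_zero]
  rcases le_or_gt u 1 with h1 | h1
  · rw [if_pos h1, Real.norm_eq_abs, abs_mul, abs_of_nonneg (rpow_nh_nonneg u), mul_comm M]
    exact mul_le_mul_of_nonneg_left (hM _) (rpow_nh_nonneg u)
  · rw [if_neg (not_le.2 h1)]
    have hxu : (0:ℝ) < x + u := by linarith
    have hsq : u^2 ≤ (x+u)^2 := by nlinarith
    have h3 : u^2 * |h (x + u)| ≤ C :=
      le_trans (mul_le_mul_of_nonneg_right hsq (abs_nonneg _)) (hC (x+u))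
    have h4 : |h (x + u)| ≤ C / u^2 := by
      rw [le_div_iff₀ (by positivity)]
      nlinarith
    have h5 : u ^ (-2:ℝ) = (u^2)⁻¹ := by
      rw [show (-2:ℝ) = -((2:ℕ):ℝ) by norm_num, Real.rpow_neg (by linarith), Real.rpow_natCast]
    rw [Real.norm_eq_abs, abs_mul, abs_of_nonneg (rpow_nh_nonneg u)]
    calc u ^ (-(1/2):ℝ) * |h (x + u)| ≤ u ^ (-(1/2):ℝ) * (C / u^2) :=
          mul_le_mul_of_nonneg_left h4 (rpow_nh_nonneg u)
      _ = C * u ^ (-2:ℝ) * u ^ (-(1/2):ℝ) := by rw [h5]; ring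

lemma hasDerivAt_right {v : ℝ → ℝ} (hv : ContDiff ℝ (⊤ : ℕ∞) v)
    {Mv Cv M2 C2 : ℝ} (hMv : ∀ s, |v s| ≤ Mv) (hCv : ∀ s, s^2 * |v s| ≤ Cv)
    (hM2 : ∀ s, |deriv v s| ≤ M2) (hC2 : ∀ s, s^2 * |deriv v s| ≤ C2)
    {t : ℝ} (ht : 0 < t) :
    HasDerivAt (fun τ => ∫ u in Ioi (0:ℝ), u ^ (-(1/2):ℝ) * v (τ + u))
      (∫ u in Ioi (0:ℝ), u ^ (-(1/2):ℝ) * deriv v (t + u)) t := by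
  have hvc : Continuous v := hv.continuous
  have hvd : Differentiable ℝ v := hv.differentiable (by simp)
  have hder : ∀ (x u : ℝ), HasDerivAt (fun x => u ^ (-(1/2):ℝ) * v (x + u))
      (u ^ (-(1/2):ℝ) * deriv v (x + u)) x := by
    intro x u
    have h1 : HasDerivAt (fun x => v (x + u)) (deriv v (x + u)) x := by
      simpa [Function.comp_def] using (HasDerivAt.comp x (hvd (x + u)).hasDerivAt
        ((hasDerivAt_id x).add_const u))
    exact h1.const_mul _
  have hFmeas : ∀ x : ℝ, AEStronglyMeasurable (fun u => u ^ (-(1/2):ℝ) * v (x + u))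
      (volume.restrict (Ioi 0)) :=
    fun x => ((meas_nh.mul ((hvc.comp (continuous_const.add continuous_id)).measurable))).aestronglyMeasurable
  have hF'meas : AEStronglyMeasurable (fun u => u ^ (-(1/2):ℝ) * deriv v (t + u))
      (volume.restrict (Ioi 0)) :=
    ((meas_nh.mul (((hv.continuous_deriv (by simp)).comp
      (continuous_const.add continuous_id)).measurable))).aestronglyMeasurable
  have key := hasDerivAt_integral_of_dominated_loc_of_deriv_le (s := ball t t) (ball_mem_nhds t ht)
    (F := fun x u => u ^ (-(1/2):ℝ) * v (x + u))
    (F' := fun x u => u ^ (-(1/2):ℝ) * deriv v (x + u))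
    (x₀ := t)
    (bound := fun u => if u ≤ 1 then M2 * u ^ (-(1/2):ℝ)
      else C2 * u ^ (-2:ℝ) * u ^ (-(1/2):ℝ))
    (Filter.Eventually.of_forall hFmeas)
    ?_ hF'meas
    (Filter.Eventually.of_forall (fun u x hx => ?_))
    (twopiece_integrable M2 C2)
    (Filter.Eventually.of_forall (fun u x _ => hder x u))
  · exact key.2
  · refine Integrable.mono' (twopiece_integrable Mv Cv)
      (hFmeas t) (Filter.Eventually.of_forall (fun u => ?_))
    exact twopiece_bound hMv hCv ht u
  · have hx0 : 0 < x := by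
      have h := mem_ball_iff_norm.1 hx
      rw [Real.norm_eq_abs] at h
      linarith [(abs_lt.1 h).1]
    exact twopiece_bound hM2 hC2 hx0 u



lemma subst_left {w : ℝ → ℝ} (hw0 : ∀ s ≤ (0:ℝ), w s = 0) (τ : ℝ) :
    ∫ s in Ioc (0:ℝ) τ, (τ - s) ^ (-(1/2):ℝ) * w s
      = ∫ u in Ioi (0:ℝ), u ^ (-(1/2):ℝ) * w (τ - u) := by
  have h1 : ∫ s in Ioc (0:ℝ) τ, (τ - s) ^ (-(1/2):ℝ) * w s
      = ∫ s, (τ - s) ^ (-(1/2):ℝ) * w s := by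
    refine setIntegral_eq_integral_of_forall_compl_eq_zero (fun s hs => ?_)
    rcases le_or_gt s 0 with h | h
    · rw [hw0 s h, mul_zero]
    · have : τ < s := by
        by_contra hc
        exact hs (mem_Ioc.2 ⟨h, not_lt.1 hc⟩)
      rw [rpow_nh_nonpos (by linarith), zero_mul]
  have h2 : ∫ u, (τ - (τ - u)) ^ (-(1/2):ℝ) * w (τ - u)
      = ∫ s, (τ - s) ^ (-(1/2):ℝ) * w s :=
    integral_sub_left_eq_self (fun s => (τ - s) ^ (-(1/2):ℝ) * w s) volume τ
  have h3 : (fun u : ℝ => (τ - (τ - u)) ^ (-(1/2):ℝ) * w (τ - u))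
      = fun u => u ^ (-(1/2):ℝ) * w (τ - u) := by
    funext u; rw [sub_sub_cancel]
  have h4 : ∫ u in Ioi (0:ℝ), u ^ (-(1/2):ℝ) * w (τ - u)
      = ∫ u, u ^ (-(1/2):ℝ) * w (τ - u) := by
    refine setIntegral_eq_integral_of_forall_compl_eq_zero (fun u hu => ?_)
    rw [rpow_nh_nonpos (not_lt.1 (fun h => hu h)), zero_mul]
  rw [h1, h4, ← h2, h3]

lemma unsubst_left {f : ℝ → ℝ} (hf0 : ∀ s ≤ (0:ℝ), f s = 0) (t : ℝ) :
    ∫ u in Ioi (0:ℝ), u ^ (-(1/2):ℝ) * f (t - u)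
      = ∫ a, (t - a) ^ (-(1/2):ℝ) * f a := by
  exact (subst_left hf0 t).symm.trans (by
    refine (setIntegral_eq_integral_of_forall_compl_eq_zero (fun s hs => ?_))
    rcases le_or_gt s 0 with h | h
    · rw [hf0 s h, mul_zero]
    · have : t < s := by
        by_contra hc
        exact hs (mem_Ioc.2 ⟨h, not_lt.1 hc⟩)
      rw [rpow_nh_nonpos (by linarith), zero_mul])

lemma subst_right (v : ℝ → ℝ) (τ : ℝ) :
    ∫ s in Ioi τ, (s - τ) ^ (-(1/2):ℝ) * v s
      = ∫ u in Ioi (0:ℝ), u ^ (-(1/2):ℝ) * v (τ + u) := by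
  have h1 : ∫ s in Ioi τ, (s - τ) ^ (-(1/2):ℝ) * v s
      = ∫ s, (s - τ) ^ (-(1/2):ℝ) * v s := by
    refine setIntegral_eq_integral_of_forall_compl_eq_zero (fun s hs => ?_)
    rw [rpow_nh_nonpos (by simpa using sub_nonpos.2 (not_lt.1 (fun h : τ < s => hs h))), zero_mul]
  have h2 : ∫ u, (τ + u - τ) ^ (-(1/2):ℝ) * v (τ + u)
      = ∫ s, (s - τ) ^ (-(1/2):ℝ) * v s :=
    integral_add_left_eq_self (fun s => (s - τ) ^ (-(1/2):ℝ) * v s) τ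
  have h3 : (fun u : ℝ => (τ + u - τ) ^ (-(1/2):ℝ) * v (τ + u))
      = fun u => u ^ (-(1/2):ℝ) * v (τ + u) := by
    funext u; rw [add_sub_cancel_left]
  have h4 : ∫ u in Ioi (0:ℝ), u ^ (-(1/2):ℝ) * v (τ + u)
      = ∫ u, u ^ (-(1/2):ℝ) * v (τ + u) := by
    refine setIntegral_eq_integral_of_forall_compl_eq_zero (fun u hu => ?_)
    rw [rpow_nh_nonpos (not_lt.1 (fun h => hu h)), zero_mul]
  rw [h1, h4, ← h2, h3]

lemma unsubst_right {g : ℝ → ℝ} {t : ℝ} (ht : 0 ≤ t) :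
    ∫ u in Ioi (0:ℝ), u ^ (-(1/2):ℝ) * g (t + u)
      = ∫ b in Ioi (0:ℝ), (b - t) ^ (-(1/2):ℝ) * g b := by
  rw [← subst_right g t]
  have e1 : ∫ s in Ioi t, (s - t) ^ (-(1/2):ℝ) * g s
      = ∫ s, (s - t) ^ (-(1/2):ℝ) * g s := by
    refine setIntegral_eq_integral_of_forall_compl_eq_zero (fun s hs => ?_)
    rw [rpow_nh_nonpos (sub_nonpos.2 (not_lt.1 (fun h => hs h))), zero_mul]
  have e2 : ∫ b in Ioi (0:ℝ), (b - t) ^ (-(1/2):ℝ) * g b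
      = ∫ b, (b - t) ^ (-(1/2):ℝ) * g b := by
    refine setIntegral_eq_integral_of_forall_compl_eq_zero (fun b hb => ?_)
    rw [rpow_nh_nonpos (sub_nonpos.2 (le_trans (not_lt.1 (fun h => hb h)) ht)), zero_mul]
  rw [e1, e2]



lemma integrableOn_Ioi_of_decay {g : ℝ → ℝ} (hgc : Continuous g) {C : ℝ}
    (hC : ∀ s, s^2 * |g s| ≤ C) : IntegrableOn g (Ioi 0) volume := by
  have hC0 : 0 ≤ C := le_trans (by positivity) (hC 1)
  have h2 : IntegrableOn g (Ioc 0 1) volume :=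
    (hgc.integrableOn_Icc (a := 0) (b := 1)).mono_set Ioc_subset_Icc_self
  have h3 : IntegrableOn g (Ioi 1) volume := by
    refine Integrable.mono' ((integrableOn_Ioi_rpow_of_lt (a := -2) (by norm_num)
      one_pos).const_mul C) hgc.aestronglyMeasurable.restrict ?_
    refine (ae_restrict_iff' measurableSet_Ioi).2 (Filter.Eventually.of_forall (fun s hs => ?_))
    have hs1 : (1:ℝ) < s := hs
    have h5 : s ^ (-2:ℝ) = (s^2)⁻¹ := by
      rw [show (-2:ℝ) = -((2:ℕ):ℝ) by norm_num, Real.rpow_neg (by linarith), Real.rpow_natCast]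
    rw [Real.norm_eq_abs, h5, ← div_eq_mul_inv, le_div_iff₀ (by positivity)]
    calc |g s| * s^2 = s^2 * |g s| := by ring
      _ ≤ C := hC s
  have := h2.union h3
  rwa [Ioc_union_Ioi_eq_Ioi zero_le_one] at this

lemma integrable_of_decay {f : ℝ → ℝ} (hfc : Continuous f)
    (h0 : ∀ s ≤ (0:ℝ), f s = 0) {C : ℝ} (hC : ∀ s, s^2 * |f s| ≤ C) :
    Integrable f volume := by
  have h1 : IntegrableOn f (Iic 0) volume :=
    IntegrableOn.congr_fun (integrableOn_zero) (fun s hs => (h0 s hs).symm) measurableSet_Iic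
  have h2 := integrableOn_Ioi_of_decay hfc hC
  have h3 := h1.union h2
  have h4 : Iic (0:ℝ) ∪ Ioi 0 = univ := Iic_union_Ioi
  rw [h4] at h3
  rwa [integrableOn_univ] at h3

lemma deriv_zero_of_zero_on_nonpos {w : ℝ → ℝ} (hw : ContDiff ℝ (⊤ : ℕ∞) w)
    (hw0 : ∀ s ≤ (0:ℝ), w s = 0) : ∀ s ≤ (0:ℝ), deriv w s = 0 := by
  have hlt : ∀ s < (0:ℝ), deriv w s = 0 := by
    intro s hs
    have hev : w =ᶠ[nhds s] (fun _ => (0:ℝ)) :=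
      Filter.eventuallyEq_of_mem (Iio_mem_nhds hs) (fun x hx => hw0 x (le_of_lt hx))
    rw [hev.deriv_eq, deriv_const]
  intro s hs
  rcases lt_or_eq_of_le hs with h | h
  · exact hlt s h
  · subst h
    have hc : ContinuousAt (deriv w) 0 := (hw.continuous_deriv (by simp)).continuousAt
    have h1 : Filter.Tendsto (deriv w) (nhdsWithin 0 (Iio 0)) (nhds (deriv w 0)) :=
      (hc.tendsto).mono_left nhdsWithin_le_nhds
    have h2 : Filter.Tendsto (deriv w) (nhdsWithin 0 (Iio 0)) (nhds 0) :=
      Filter.Tendsto.congr' (Filter.eventuallyEq_of_mem self_mem_nhdsWithin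
        (fun x hx => (hlt x hx).symm)) tendsto_const_nhds
    exact tendsto_nhds_unique h1 h2

lemma ftc_Iio {w : ℝ → ℝ} (hw : ContDiff ℝ (⊤ : ℕ∞) w) (hw0 : ∀ s ≤ (0:ℝ), w s = 0)
    (hfi : Integrable (deriv w) volume) (b : ℝ) :
    ∫ a in Iio b, deriv w a = w b := by
  rw [setIntegral_congr_set Iio_ae_eq_Iic]
  have ht : Filter.Tendsto w Filter.atBot (nhds 0) := by
    refine Filter.Tendsto.congr' ?_ tendsto_const_nhds
    exact Filter.eventuallyEq_of_mem (Filter.Iic_mem_atBot 0) (fun x hx => (hw0 x hx).symm)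
  have := integral_Iic_of_hasDerivAt_of_tendsto' (a := b)
    (fun x _ => (hw.differentiable (by simp) x).hasDerivAt) hfi.integrableOn ht
  rw [this, sub_zero]



lemma fubini_core {f g : ℝ → ℝ} {c : ℝ}
    (hc : c * c * Real.pi = 1)
    (hfm : Measurable f) (hgm : Measurable g)
    (hfi : Integrable f volume) (hgi : IntegrableOn g (Ioi 0) volume)
    (hf0 : ∀ s ≤ (0:ℝ), f s = 0) :
    ∫ t in Ioi (0:ℝ), (c * ∫ a, (t - a) ^ (-(1/2):ℝ) * f a)
        * (c * ∫ b in Ioi (0:ℝ), (b - t) ^ (-(1/2):ℝ) * (-g b))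
      = ∫ b in Ioi (0:ℝ), (∫ a in Iio b, f a) * (-g b) := by
  set ν : Measure ℝ := volume.restrict (Ioi 0) with hν
  set Φ : ℝ → ℝ × ℝ → ℝ := fun t z =>
    (c * ((t - z.1) ^ (-(1/2):ℝ) * f z.1)) * (c * ((z.2 - t) ^ (-(1/2):ℝ) * (-g z.2))) with hΦ
  -- step 1 : product of integrals
  have step1 : ∀ t : ℝ, (c * ∫ a, (t - a) ^ (-(1/2):ℝ) * f a)
      * (c * ∫ b in Ioi (0:ℝ), (b - t) ^ (-(1/2):ℝ) * (-g b))
      = ∫ z, Φ t z ∂(volume.prod ν) := by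
    intro t
    rw [← integral_const_mul c, ← integral_const_mul c]
    exact (integral_prod_mul (μ := volume) (ν := ν)
      (fun a => c * ((t - a) ^ (-(1/2):ℝ) * f a))
      (fun b => c * ((b - t) ^ (-(1/2):ℝ) * (-g b)))).symm
  -- pointwise vanishing for t ≤ 0
  have hvanish : ∀ t ≤ (0:ℝ), ∀ z : ℝ × ℝ, Φ t z = 0 := by
    intro t ht z
    simp only [hΦ]
    rcases le_or_gt z.1 0 with h | h
    · rw [hf0 z.1 h, mul_zero, mul_zero, zero_mul]
    · have h2 : t - z.1 ≤ 0 := by linarith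
      rw [rpow_nh_nonpos h2, zero_mul, mul_zero, zero_mul]
  -- measurability of Φ
  have hmeas : AEStronglyMeasurable (Function.uncurry Φ) (volume.prod (volume.prod ν)) := by
    have m1 : Measurable fun p : ℝ × ℝ × ℝ => (p.1 - p.2.1) ^ (-(1/2):ℝ) :=
      meas_nh.comp (measurable_fst.sub (measurable_fst.comp measurable_snd))
    have m2 : Measurable fun p : ℝ × ℝ × ℝ => (p.2.2 - p.1) ^ (-(1/2):ℝ) :=
      meas_nh.comp ((measurable_snd.comp measurable_snd).sub measurable_fst)
    have mf : Measurable fun p : ℝ × ℝ × ℝ => f p.2.1 :=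
      hfm.comp (measurable_fst.comp measurable_snd)
    have mg : Measurable fun p : ℝ × ℝ × ℝ => -g p.2.2 :=
      (hgm.comp (measurable_snd.comp measurable_snd)).neg
    exact (((m1.mul mf).const_mul c).mul ((m2.mul mg).const_mul c)).aestronglyMeasurable
  -- rewriting of Φ slices
  have hslice : ∀ z : ℝ × ℝ, (fun t => Φ t z)
      = fun t => (c * c * (f z.1 * -g z.2))
          * ((t - z.1) ^ (-(1/2):ℝ) * (z.2 - t) ^ (-(1/2):ℝ)) := by
    intro z; funext t; simp only [hΦ]; ring
  -- integrability of Φ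
  have hint : Integrable (Function.uncurry Φ) (volume.prod (volume.prod ν)) := by
    rw [integrable_prod_iff' hmeas]
    constructor
    · refine Filter.Eventually.of_forall (fun z => ?_)
      have h2 : Integrable (fun t => (c * c * (f z.1 * -g z.2))
          * ((t - z.1) ^ (-(1/2):ℝ) * (z.2 - t) ^ (-(1/2):ℝ))) volume :=
        (kernel_integrable z.1 z.2).const_mul _
      show Integrable (fun x => Φ x z) volume
      rw [show (fun x => Φ x z) = _ from hslice z]
      exact h2
    · have heq : (fun z : ℝ × ℝ => ∫ t, ‖Φ t z‖)
          = fun z => ‖c * c * (f z.1 * -g z.2)‖ * (if z.1 < z.2 then Real.pi else 0) := by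
        funext z
        have : (fun t => ‖Φ t z‖) = fun t => ‖c * c * (f z.1 * -g z.2)‖
            * ((t - z.1) ^ (-(1/2):ℝ) * (z.2 - t) ^ (-(1/2):ℝ)) := by
          funext t
          rw [congrFun (hslice z) t]
          rw [norm_mul, Real.norm_eq_abs ((t - z.1) ^ (-(1/2):ℝ) * (z.2 - t) ^ (-(1/2):ℝ)),
            abs_of_nonneg (mul_nonneg (rpow_nh_nonneg _) (rpow_nh_nonneg _))]
        rw [this, integral_const_mul, kernel_integral]
      show Integrable (fun z : ℝ × ℝ => ∫ t, ‖Φ t z‖) (volume.prod ν)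
      rw [heq]
      have hbnd : Integrable (fun z : ℝ × ℝ => (c * c * Real.pi) * (|f z.1| * |g z.2|))
          (volume.prod ν) := ((hfi.abs.mul_prod hgi.abs).const_mul _)
      refine hbnd.mono' ?_ (Filter.Eventually.of_forall (fun z => ?_))
      · refine (Measurable.aestronglyMeasurable ?_)
        have : Measurable fun z : ℝ × ℝ => (if z.1 < z.2 then Real.pi else 0) := by
          exact Measurable.ite (measurableSet_lt measurable_fst measurable_snd)
            measurable_const measurable_const
        exact ((((hfm.comp measurable_fst).mul
          ((hgm.comp measurable_snd).neg)).const_mul (c*c)).norm.mul this)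
      · rw [Real.norm_eq_abs, abs_mul]
        have h1 : |‖c * c * (f z.1 * -g z.2)‖| = |c * c| * (|f z.1| * |g z.2|) := by
          rw [Real.norm_eq_abs, abs_abs, abs_mul (c*c), abs_mul (f z.1), abs_neg]
        rw [h1]
        rcases lt_or_ge z.1 z.2 with h | h
        · rw [if_pos h, abs_of_nonneg Real.pi_pos.le]
          have hcc : 0 < c * c := by nlinarith [Real.pi_pos]
          rw [abs_of_pos hcc]
          exact le_of_eq (by ring)
        · rw [if_neg (not_lt.2 h), abs_zero, mul_zero]
          positivity
  -- swap
  have step2 : ∫ t, (∫ z, Φ t z ∂(volume.prod ν)) = ∫ z, (∫ t, Φ t z) ∂(volume.prod ν) :=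
    integral_integral_swap hint
  -- inner integral computation
  have step3 : ∀ z : ℝ × ℝ, (∫ t, Φ t z)
      = if z.1 < z.2 then f z.1 * -g z.2 else 0 := by
    intro z
    rw [hslice z, integral_const_mul, kernel_integral]
    rcases lt_or_ge z.1 z.2 with h | h
    · rw [if_pos h, if_pos h]
      have h3 : c * c * (f z.1 * -g z.2) * Real.pi
          = (f z.1 * -g z.2) * (c * c * Real.pi) := by ring
      rw [h3, hc, mul_one]
    · rw [if_neg (not_lt.2 h), if_neg (not_lt.2 h), mul_zero]
  -- integrability of the result
  have hψ : Integrable (fun z : ℝ × ℝ => if z.1 < z.2 then f z.1 * -g z.2 else 0)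
      (volume.prod ν) := by
    refine (hfi.abs.mul_prod hgi.abs).mono' ?_ (Filter.Eventually.of_forall (fun z => ?_))
    · exact (Measurable.ite (measurableSet_lt measurable_fst measurable_snd)
        ((hfm.comp measurable_fst).mul ((hgm.comp measurable_snd).neg))
        measurable_const).aestronglyMeasurable
    · rcases lt_or_ge z.1 z.2 with h | h
      · rw [if_pos h, Real.norm_eq_abs, abs_mul, abs_neg]
      · rw [if_neg (not_lt.2 h), norm_zero]
        positivity
  calc ∫ t in Ioi (0:ℝ), (c * ∫ a, (t - a) ^ (-(1/2):ℝ) * f a)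
        * (c * ∫ b in Ioi (0:ℝ), (b - t) ^ (-(1/2):ℝ) * (-g b))
      = ∫ t in Ioi (0:ℝ), (∫ z, Φ t z ∂(volume.prod ν)) := by
        exact setIntegral_congr_fun measurableSet_Ioi (fun t _ => step1 t)
    _ = ∫ t, (∫ z, Φ t z ∂(volume.prod ν)) := by
        refine setIntegral_eq_integral_of_forall_compl_eq_zero (fun t ht => ?_)
        have ht' : t ≤ 0 := not_lt.1 (fun h => ht h)
        simp only [hvanish t ht', integral_zero]
    _ = ∫ z, (∫ t, Φ t z) ∂(volume.prod ν) := step2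
    _ = ∫ z, (if z.1 < z.2 then f z.1 * -g z.2 else 0) ∂(volume.prod ν) := by
        exact integral_congr_ae (Filter.Eventually.of_forall step3)
    _ = ∫ b in Ioi (0:ℝ), ∫ a, (if a < b then f a * -g b else 0) ∂volume := by
        exact integral_prod_symm _ hψ
    _ = ∫ b in Ioi (0:ℝ), (∫ a in Iio b, f a) * (-g b) := by
        refine setIntegral_congr_fun measurableSet_Ioi (fun b _ => ?_)
        have h1 : (fun a => if a < b then f a * -g b else 0)
            = Set.indicator (Iio b) (fun a => f a * -g b) := by
          funext a
          rw [Set.indicator_apply]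
          simp [mem_Iio]
        rw [h1, integral_indicator measurableSet_Iio, ← integral_mul_const]


end Stmt6Aux

/-- half-derivative integration by parts: for smooth, rapidly
decaying `w, v` with `w` vanishing on `(-∞,0]` (i.e. `w ∈ F₀(ℝ₊)`, `v ∈ F(ℝ₊)`),
`∫₀^∞ w (−v') = ∫₀^∞ (D₊^{1/2} w)(D₋^{1/2} v)`. -/
theorem stmt6 (w v : ℝ → ℝ)
    (hw : ContDiff ℝ (⊤ : ℕ∞) w) (hv : ContDiff ℝ (⊤ : ℕ∞) v)
    (hw0 : ∀ t ≤ (0 : ℝ), w t = 0)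
    (hwdec : ∀ k n : ℕ, ∃ C : ℝ, ∀ t : ℝ, |t| ^ k * |iteratedDeriv n w t| ≤ C)
    (hvdec : ∀ k n : ℕ, ∃ C : ℝ, ∀ t : ℝ, |t| ^ k * |iteratedDeriv n v t| ≤ C) :
    ∫ t in Set.Ioi (0 : ℝ), w t * (-(deriv v t))
      = ∫ t in Set.Ioi (0 : ℝ), DplusHalf w t * DminusHalf v t := by
  classical
  set c : ℝ := (Real.Gamma (1 / 2))⁻¹ with hcdef
  have hc : c * c * Real.pi = 1 := by
    rw [hcdef, Real.Gamma_one_half_eq, ← mul_inv, Real.mul_self_sqrt Real.pi_pos.le,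
      inv_mul_cancel₀ (ne_of_gt Real.pi_pos)]
  obtain ⟨Mw, hMw'⟩ := hwdec 0 0
  have hMw : ∀ s, |w s| ≤ Mw := fun s => by
    have := hMw' s; rwa [pow_zero, one_mul, iteratedDeriv_zero] at this
  obtain ⟨M1, hM1'⟩ := hwdec 0 1
  have hM1 : ∀ s, |deriv w s| ≤ M1 := fun s => by
    have := hM1' s; rwa [pow_zero, one_mul, iteratedDeriv_one] at this
  obtain ⟨C1, hC1'⟩ := hwdec 2 1
  have hC1 : ∀ s, s^2 * |deriv w s| ≤ C1 := fun s => by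
    have := hC1' s; rwa [iteratedDeriv_one, sq_abs] at this
  obtain ⟨Mv, hMv'⟩ := hvdec 0 0
  have hMv : ∀ s, |v s| ≤ Mv := fun s => by
    have := hMv' s; rwa [pow_zero, one_mul, iteratedDeriv_zero] at this
  obtain ⟨Cv, hCv'⟩ := hvdec 2 0
  have hCv : ∀ s, s^2 * |v s| ≤ Cv := fun s => by
    have := hCv' s; rwa [iteratedDeriv_zero, sq_abs] at this
  obtain ⟨M2, hM2'⟩ := hvdec 0 1
  have hM2 : ∀ s, |deriv v s| ≤ M2 := fun s => by
    have := hM2' s; rwa [pow_zero, one_mul, iteratedDeriv_one] at this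
  obtain ⟨C2, hC2'⟩ := hvdec 2 1
  have hC2 : ∀ s, s^2 * |deriv v s| ≤ C2 := fun s => by
    have := hC2' s; rwa [iteratedDeriv_one, sq_abs] at this
  have hf0 : ∀ s ≤ (0:ℝ), deriv w s = 0 := deriv_zero_of_zero_on_nonpos hw hw0
  have hf0' : ∀ s < (0:ℝ), deriv w s = 0 := fun s hs => hf0 s hs.le
  have hfi : Integrable (deriv w) volume :=
    integrable_of_decay (hw.continuous_deriv (by simp)) hf0 hC1
  have hgi : IntegrableOn (deriv v) (Ioi 0) volume :=
    integrableOn_Ioi_of_decay (hv.continuous_deriv (by simp)) hC2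
  have hfm : Measurable (deriv w) := (hw.continuous_deriv (by simp)).measurable
  have hgm : Measurable (deriv v) := (hv.continuous_deriv (by simp)).measurable
  -- formula for the left half-derivative
  have hDp : ∀ t : ℝ, DplusHalf w t = c * ∫ a, (t - a) ^ (-(1/2):ℝ) * deriv w a := by
    intro t
    have h0 : DplusHalf w t
        = deriv (fun τ => c * ∫ s in Ioc (0:ℝ) τ, (τ - s) ^ (-(1/2):ℝ) * w s) t := rfl
    have funeq : (fun τ => c * ∫ s in Ioc (0:ℝ) τ, (τ - s) ^ (-(1/2):ℝ) * w s)
        = fun τ => c * ∫ u in Ioi (0:ℝ), u ^ (-(1/2):ℝ) * w (τ - u) := by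
      funext τ; rw [subst_left hw0 τ]
    have hD := (hasDerivAt_left hw hMw hM1 hw0 hf0' t).const_mul c
    rw [h0, funeq, hD.deriv, unsubst_left hf0 t]
  -- formula for the right half-derivative
  have hDm : ∀ t : ℝ, 0 < t →
      DminusHalf v t = c * ∫ b in Ioi (0:ℝ), (b - t) ^ (-(1/2):ℝ) * (-(deriv v b)) := by
    intro t ht
    have h0 : DminusHalf v t
        = - deriv (fun τ => c * ∫ s in Ioi τ, (s - τ) ^ (-(1/2):ℝ) * v s) t := rfl
    have funeq : (fun τ => c * ∫ s in Ioi τ, (s - τ) ^ (-(1/2):ℝ) * v s)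
        = fun τ => c * ∫ u in Ioi (0:ℝ), u ^ (-(1/2):ℝ) * v (τ + u) := by
      funext τ; rw [subst_right v τ]
    have hD := (hasDerivAt_right hv hMv hCv hM2 hC2 ht).const_mul c
    have h1 : -(c * ∫ u in Ioi (0:ℝ), u ^ (-(1/2):ℝ) * deriv v (t + u))
        = c * ∫ u in Ioi (0:ℝ), u ^ (-(1/2):ℝ) * (-(deriv v (t + u))) := by
      rw [← mul_neg, ← integral_neg]
      congr 1
      exact integral_congr_ae (Filter.Eventually.of_forall (fun u => by ring))
    have h2 : ∫ u in Ioi (0:ℝ), u ^ (-(1/2):ℝ) * (-(deriv v (t + u)))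
        = ∫ b in Ioi (0:ℝ), (b - t) ^ (-(1/2):ℝ) * (-(deriv v b)) :=
      unsubst_right (g := fun b => -(deriv v b)) ht.le
    rw [h0, funeq, hD.deriv, h1, h2]
  have hW : ∀ b : ℝ, ∫ a in Iio b, deriv w a = w b := ftc_Iio hw hw0 hfi
  have main := fubini_core hc hfm hgm hfi hgi hf0
  calc ∫ t in Ioi (0:ℝ), w t * (-(deriv v t))
      = ∫ b in Ioi (0:ℝ), (∫ a in Iio b, deriv w a) * (-(deriv v b)) := by
        refine (setIntegral_congr_fun measurableSet_Ioi (fun b _ => ?_))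
        rw [hW b]
    _ = ∫ t in Ioi (0:ℝ), (c * ∫ a, (t - a) ^ (-(1/2):ℝ) * deriv w a)
          * (c * ∫ b in Ioi (0:ℝ), (b - t) ^ (-(1/2):ℝ) * (-(deriv v b))) := main.symm
    _ = ∫ t in Ioi (0:ℝ), DplusHalf w t * DminusHalf v t := by
        refine setIntegral_congr_fun measurableSet_Ioi (fun t ht => ?_)
        rw [hDp t, hDm t ht]
end
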